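/- Let τ1, τ2, τ3 be complex numbers with τ = [[τ1, τ2], [τ2, τ3]] having positive definite imaginary part. Suppose there exist rationals a, b, a', b', a'', b'' with τ2 = a + b·τ1, τ3 = a' + b'·τ1, and τ2² − τ1·τ3 = a'' + b''·τ1. Then b' ≠ b² and τ1 satisfies a nonzero quadratic equation with rational coefficients; in particular τ1 is algebraic of degree at most 2 over ℚ. -/
import Mathlib


theorem stmt9 (τ1 τ2 τ3 : ℂ)
    (h1 : 0 < τ1.im) (h3 : 0 < τ3.im) (hpd : τ2.im ^ 2 < τ1.im * τ3.im)
    (a b a' b' a'' b'' : ℚ)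
    (e2 : τ2 = (a : ℂ) + (b : ℂ) * τ1) (e3 : τ3 = (a' : ℂ) + (b' : ℂ) * τ1)
    (e4 : τ2 ^ 2 - τ1 * τ3 = (a'' : ℂ) + (b'' : ℂ) * τ1) :
    b' ≠ b ^ 2 ∧ ∃ p q r : ℚ, p ≠ 0 ∧ (p : ℂ) * τ1 ^ 2 + (q : ℂ) * τ1 + (r : ℂ) = 0 := by
  have him2 : τ2.im = (b : ℝ) * τ1.im := by rw [e2]; simp
  have him3 : τ3.im = (b' : ℝ) * τ1.im := by rw [e3]; simp
  have hlt : ((b : ℝ)) ^ 2 < (b' : ℝ) := by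
    rw [him2, him3] at hpd
    nlinarith [sq_nonneg τ1.im]
  have hne : b' ≠ b ^ 2 := by
    intro h
    rw [h] at hlt
    push_cast at hlt
    exact lt_irrefl _ hlt
  refine ⟨hne, b ^ 2 - b', 2 * a * b - a' - b'', a ^ 2 - a'', ?_, ?_⟩
  · intro h
    apply hne
    have := sub_eq_zero.mp h
    linarith [this.symm]
  · rw [e2, e3] at e4
    push_cast
    linear_combination e4
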